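/- arXiv:2204.03264 — 2 statements merged into one kernel-verified Lean document; each statement's English description precedes it below -/
import Mathlib

section
/- Define t₀(s, N) = sign(N - μ(s))·√(2(μ(s) - N + N·ln(N/μ(s)))) for μ(s) > 0 and integer N ≥ 0, with the convention 0·ln 0 = 0. Then for fixed μ > 0, t₀ is monotone increasing in N: t₀(s, N+1) ≥ t₀(s, N) for all N ≥ 0. -/
/-!
With `x = N / μ` the radicand equals `2 μ · klFun x`, where `klFun x = x log x + 1 - x`, and
`sign (N - μ) = sign (x - 1)`; hence `t₀ = √(2μ) · sign (x - 1) · √(klFun x)`. Since `klFun` is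
convex on `[0, ∞)` with minimum `0` at `1`, it decreases on `[0, 1]` and increases on `[1, ∞)`,
so its signed square root is monotone on `[0, ∞)`.
-/

/-- The signed Poisson likelihood-ratio statistic `t₀`. -/
noncomputable def t0 (μ : ℝ) (N : ℕ) : ℝ :=
  Real.sign ((N : ℝ) - μ) *
    Real.sqrt (2 * (μ - (N : ℝ) + (N : ℝ) * Real.log ((N : ℝ) / μ)))

open Set InformationTheory

section ConvexMinimum

variable {𝕜 β : Type*} [Field 𝕜] [LinearOrder 𝕜] [IsStrictOrderedRing 𝕜]
  [AddCommMonoid β] [LinearOrder β] [IsOrderedCancelAddMonoid β] [Module 𝕜 β]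
  [PosSMulStrictMono 𝕜 β] {s : Set 𝕜} {f : 𝕜 → β} {a : 𝕜}

theorem ConvexOn.monotoneOn_of_isMinOn (hf : ConvexOn 𝕜 s f) (hmin : IsMinOn f s a)
    (ha : a ∈ s) : MonotoneOn f (s ∩ Ici a) := by
  rintro x ⟨hxs, hax⟩ y ⟨hys, -⟩ hxy
  rcases hax.eq_or_lt with rfl | hax
  · exact hmin hys
  · exact hf.le_right_of_left_le'' ha hys hax hxy (isMinOn_iff.mp hmin x hxs)

theorem ConvexOn.antitoneOn_of_isMinOn (hf : ConvexOn 𝕜 s f) (hmin : IsMinOn f s a)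
    (ha : a ∈ s) : AntitoneOn f (s ∩ Iic a) := by
  rintro x ⟨hxs, -⟩ y ⟨hys, hya⟩ hxy
  rcases hya.eq_or_lt with rfl | hya
  · exact hmin hxs
  · exact hf.le_left_of_right_le'' hxs ha hxy hya (isMinOn_iff.mp hmin y hys)

end ConvexMinimum

theorem Real.sign_mul_of_pos {c : ℝ} (hc : 0 < c) (r : ℝ) : Real.sign (c * r) = Real.sign r := by
  rcases lt_trichotomy r 0 with hr | rfl | hr
  · rw [Real.sign_of_neg hr, Real.sign_of_neg (mul_neg_of_pos_of_neg hc hr)]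
  · rw [mul_zero]
  · rw [Real.sign_of_pos hr, Real.sign_of_pos (mul_pos hc hr)]

noncomputable def klSignedRoot (x : ℝ) : ℝ := Real.sign (x - 1) * √(klFun x)

theorem klSignedRoot_of_le_one {x : ℝ} (hx : x ≤ 1) : klSignedRoot x = -√(klFun x) := by
  rcases hx.eq_or_lt with rfl | hx
  · simp [klSignedRoot, klFun_one]
  · rw [klSignedRoot, Real.sign_of_neg (sub_neg.mpr hx), neg_one_mul]

theorem klSignedRoot_of_one_le {x : ℝ} (hx : 1 ≤ x) : klSignedRoot x = √(klFun x) := by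
  rcases hx.eq_or_lt with rfl | hx
  · simp [klSignedRoot, klFun_one]
  · rw [klSignedRoot, Real.sign_of_pos (sub_pos.mpr hx), one_mul]

theorem monotoneOn_klSignedRoot : MonotoneOn klSignedRoot (Ici 0) := by
  have hmin : IsMinOn klFun (Ici 0) 1 := isMinOn_klFun
  have hone : (1 : ℝ) ∈ Ici 0 := mem_Ici.mpr zero_le_one
  intro x hx y hy hxy
  rcases le_total y 1 with hy1 | hy1
  · rw [klSignedRoot_of_le_one hy1, klSignedRoot_of_le_one (hxy.trans hy1), neg_le_neg_iff]
    exact Real.sqrt_le_sqrt (convexOn_klFun.antitoneOn_of_isMinOn hmin hone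
      ⟨hx, hxy.trans hy1⟩ ⟨hy, hy1⟩ hxy)
  rcases le_total x 1 with hx1 | hx1
  · rw [klSignedRoot_of_le_one hx1, klSignedRoot_of_one_le hy1]
    exact (neg_nonpos.mpr (Real.sqrt_nonneg _)).trans (Real.sqrt_nonneg _)
  · rw [klSignedRoot_of_one_le hx1, klSignedRoot_of_one_le hy1]
    exact Real.sqrt_le_sqrt (convexOn_klFun.monotoneOn_of_isMinOn hmin hone
      ⟨hx, hx1⟩ ⟨hy, hy1⟩ hxy)

theorem t0_eq_sqrt_mul_klSignedRoot {μ : ℝ} (hμ : 0 < μ) (N : ℕ) :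
    t0 μ N = √(2 * μ) * klSignedRoot (N / μ) := by
  have hscale : (N : ℝ) / μ - 1 = μ⁻¹ * (N - μ) := by field_simp
  have hradicand : 2 * (μ - N + N * Real.log (N / μ)) = 2 * μ * klFun (N / μ) := by
    rw [klFun_apply]; field_simp; ring
  rw [t0, klSignedRoot, hscale, Real.sign_mul_of_pos (inv_pos.mpr hμ), hradicand,
    Real.sqrt_mul (by positivity)]
  ring

/-- for fixed μ > 0, t₀ is monotone increasing in N. -/
theorem stmt_3 (μ : ℝ) (hμ : 0 < μ) (N : ℕ) : t0 μ N ≤ t0 μ (N + 1) := by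
  rw [t0_eq_sqrt_mul_klSignedRoot hμ, t0_eq_sqrt_mul_klSignedRoot hμ]
  refine mul_le_mul_of_nonneg_left ?_ (Real.sqrt_nonneg _)
  refine monotoneOn_klSignedRoot (mem_Ici.mpr (by positivity)) (mem_Ici.mpr (by positivity)) ?_
  gcongr
  simp
end

section
/- Define t₀(μ, N) = sign(N - μ)·√(2(μ - N + N·ln(N/μ))) for μ > 0 and integer N ≥ 0 (with 0·ln 0 = 0). Then for fixed N, t₀ is monotone decreasing in μ: if 0 < μ₁ ≤ μ₂ then t₀(μ₂, N) ≤ t₀(μ₁, N). -/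
open Real Set

noncomputable def halfDeviance (μ n : ℝ) : ℝ :=
  μ - n + n * log (n / μ)

lemma halfDeviance_self (n : ℝ) : halfDeviance n n = 0 := by
  rcases eq_or_ne n 0 with rfl | hn
  · simp [halfDeviance]
  · simp [halfDeviance, div_self hn]

lemma halfDeviance_sub {μ₁ μ₂ : ℝ} (h₁ : 0 < μ₁) (h₂ : 0 < μ₂) (n : ℝ) :
    halfDeviance μ₂ n - halfDeviance μ₁ n = μ₂ - μ₁ - n * log (μ₂ / μ₁) := by
  rcases eq_or_ne n 0 with rfl | hn
  · simp [halfDeviance]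
  · simp only [halfDeviance, log_div hn h₁.ne', log_div hn h₂.ne', log_div h₂.ne' h₁.ne']
    ring

lemma halfDeviance_antitoneOn (n : ℝ) : AntitoneOn (halfDeviance · n) (Ioc 0 n) := by
  rintro μ₁ ⟨h₁ : 0 < μ₁, -⟩ μ₂ ⟨h₂ : 0 < μ₂, h₂n : μ₂ ≤ n⟩ h₁₂
  have hlog : (μ₂ - μ₁) / μ₂ ≤ log (μ₂ / μ₁) := by
    simpa [inv_div, sub_div, div_self h₂.ne'] using one_sub_inv_le_log_of_pos (div_pos h₂ h₁)
  have hdiff : 0 ≤ (μ₂ - μ₁) / μ₂ := div_nonneg (sub_nonneg.2 h₁₂) h₂.le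
  have : μ₂ - μ₁ ≤ n * log (μ₂ / μ₁) :=
    calc μ₂ - μ₁ = μ₂ * ((μ₂ - μ₁) / μ₂) := (mul_div_cancel₀ _ h₂.ne').symm
      _ ≤ n * log (μ₂ / μ₁) := mul_le_mul h₂n hlog hdiff (h₂.le.trans h₂n)
  linarith [halfDeviance_sub h₁ h₂ n]

lemma halfDeviance_monotoneOn (n : ℝ) : MonotoneOn (halfDeviance · n) (Ioi 0 ∩ Ici n) := by
  rintro μ₁ ⟨h₁ : 0 < μ₁, hn₁ : n ≤ μ₁⟩ μ₂ ⟨h₂ : 0 < μ₂, -⟩ h₁₂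
  have hlog : log (μ₂ / μ₁) ≤ (μ₂ - μ₁) / μ₁ := by
    simpa [sub_div, div_self h₁.ne'] using log_le_sub_one_of_pos (div_pos h₂ h₁)
  have hlog_nonneg : 0 ≤ log (μ₂ / μ₁) := log_nonneg ((one_le_div h₁).2 h₁₂)
  have : n * log (μ₂ / μ₁) ≤ μ₂ - μ₁ :=
    calc n * log (μ₂ / μ₁) ≤ μ₁ * ((μ₂ - μ₁) / μ₁) := mul_le_mul hn₁ hlog hlog_nonneg h₁.le
      _ = μ₂ - μ₁ := mul_div_cancel₀ _ h₁.ne'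
  linarith [halfDeviance_sub h₁ h₂ n]

lemma t0_of_le {μ : ℝ} {N : ℕ} (h : μ ≤ N) : t0 μ N = √(2 * halfDeviance μ N) := by
  rcases h.lt_or_eq with h | rfl
  · simp [t0, halfDeviance, sign_of_pos (sub_pos.2 h)]
  · simp [t0, halfDeviance_self]

lemma t0_of_ge {μ : ℝ} {N : ℕ} (h : N ≤ μ) : t0 μ N = -√(2 * halfDeviance μ N) := by
  rcases h.lt_or_eq with h | rfl
  · simp [t0, halfDeviance, sign_of_neg (sub_neg.2 h)]
  · simp [t0, halfDeviance_self]

/-- for fixed N, t₀ is monotone decreasing in μ. -/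
theorem stmt_4 (N : ℕ) (μ₁ μ₂ : ℝ) (h₁ : 0 < μ₁) (h₁₂ : μ₁ ≤ μ₂) :
    t0 μ₂ N ≤ t0 μ₁ N := by
  have h₂ : 0 < μ₂ := h₁.trans_le h₁₂
  rcases le_total μ₂ N with h₂N | hN₂
  · rw [t0_of_le h₂N, t0_of_le (h₁₂.trans h₂N)]
    exact sqrt_le_sqrt <| by
      gcongr
      exact halfDeviance_antitoneOn N ⟨h₁, h₁₂.trans h₂N⟩ ⟨h₂, h₂N⟩ h₁₂
  rcases le_total (N : ℝ) μ₁ with hN₁ | h₁N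
  · rw [t0_of_ge hN₁, t0_of_ge hN₂, neg_le_neg_iff]
    exact sqrt_le_sqrt <| by
      gcongr
      exact halfDeviance_monotoneOn N ⟨h₁, hN₁⟩ ⟨h₂, hN₂⟩ h₁₂
  · rw [t0_of_ge hN₂, t0_of_le h₁N]
    exact (neg_nonpos.2 (sqrt_nonneg _)).trans (sqrt_nonneg _)
end
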